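/- arXiv:math/0404074 — 4 statements merged into one kernel-verified Lean document; each statement's English description precedes it below -/
import Mathlib

section
/- Let G be a group, H₁, …, Hₘ subgroups of G, and X a finite subset of G which generates G (in the usual, non-relative, sense). Then the relative Cayley graph Γ^rel_X(G) of G with respect to {H₁, …, Hₘ} is hyperbolic if and only if the coned-off Cayley graph Γ̂_X(G) of G with respect to {H₁, …, Hₘ} is hyperbolic. -/
/-!
Every vertex of the coned-off graph stands for a subset of `G` (a point or a coset) and lies
at coned distance at most `1 / 2` from each of its points. Replacing each `Hᵢ`-edge of a
relative walk by the two cone edges through the coset it lies in, and conversely each detour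
through a cone vertex by one relative edge, matches walks of the two graphs with the same
(respectively no larger) length and with supports within `1 / 2` of each other. Hence the two
metrics agree on `G`, geodesics between points of `G` correspond, and a coned-off geodesic
between cone vertices becomes a relative geodesic once its first and last cone edges are
dropped. Thin triangles therefore transfer in both directions; the only defect is that the
transferred triangles may have corners broken by gaps of length at most one, which costs a
bounded multiple of `δ`.
-/

/-- The Cayley graph of a group `G` with respect to a set `S` of generators: two distinct
elements `a b : G` are adjacent iff they differ by right multiplication by an element of
`S` or the inverse of an element of `S`. -/
def cayleyGraph (G : Type*) [Group G] (S : Set G) : SimpleGraph G where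
  Adj a b := a ≠ b ∧ (a⁻¹ * b ∈ S ∨ b⁻¹ * a ∈ S)
  symm := by
    constructor
    rintro a b ⟨hne, h⟩
    exact ⟨hne.symm, h.symm⟩
  loopless := by constructor; rintro a ⟨hne, -⟩; exact hne rfl

/-- A walk in a graph is a (discrete) geodesic if its length equals the combinatorial
distance between its endpoints. -/
def SimpleGraph.IsGeodesic {V : Type*} (Γ : SimpleGraph V) {u v : V} (p : Γ.Walk u v) : Prop :=
  p.length = Γ.dist u v

/-- A graph is hyperbolic (as a geodesic metric space, with the combinatorial metric in
which every edge has length `1`) iff there is `δ ≥ 0` such that each side of every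
geodesic triangle is contained in the closed `δ`-neighbourhood of the union of the other
two sides. -/
def SimpleGraph.IsHyperbolic {V : Type*} (Γ : SimpleGraph V) : Prop :=
  ∃ δ : ℕ, ∀ (u v w : V) (p : Γ.Walk u v) (q : Γ.Walk v w) (r : Γ.Walk u w),
    Γ.IsGeodesic p → Γ.IsGeodesic q → Γ.IsGeodesic r →
    ∀ x ∈ r.support, ∃ y, (y ∈ p.support ∨ y ∈ q.support) ∧ Γ.dist x y ≤ δ

/-- `X ⊆ G` is a relative generating set of `G` with respect to the collection of
subgroups `H i`, i.e. `G` is generated by `X` together with all the `H i`. -/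
def IsRelGenSet {G : Type*} [Group G] {ι : Type*} (H : ι → Subgroup G) (X : Set G) : Prop :=
  Subgroup.closure (X ∪ ⋃ i, (H i : Set G)) = ⊤

/-- The relative Cayley graph of `G` with respect to the collection of subgroups `H i`
and the set `X`: the Cayley graph of `G` with respect to the generating set
`X ∪ ⋃ i, H i`. -/
def relCayleyGraph (G : Type*) [Group G] {ι : Type*} (H : ι → Subgroup G) (X : Set G) :
    SimpleGraph G :=
  cayleyGraph G (X ∪ ⋃ i, (H i : Set G))

/-- `G` is weakly hyperbolic relative to the collection of subgroups `H i` if there is a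
finite relative generating set `X` of `G` with respect to the `H i` such that the
corresponding relative Cayley graph is hyperbolic. -/
def IsWeaklyRelativelyHyperbolic (G : Type*) [Group G] {ι : Type*} (H : ι → Subgroup G) :
    Prop :=
  ∃ X : Set G, X.Finite ∧ IsRelGenSet H X ∧ (relCayleyGraph G H X).IsHyperbolic

/-- The coned-off Cayley graph of `G` with respect to the collection of subgroups `H i`
and the generating set `X`: the Cayley graph of `G` with respect to `X`, together with a
cone vertex for each left coset `g • H i` joined to all elements of that coset. -/
def conedOffGraph (G : Type*) [Group G] {ι : Type*} (H : ι → Subgroup G) (X : Set G) :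
    SimpleGraph (G ⊕ Σ i : ι, G ⧸ H i) where
  Adj v w :=
    match v, w with
    | .inl a, .inl b => a ≠ b ∧ (a⁻¹ * b ∈ X ∨ b⁻¹ * a ∈ X)
    | .inl a, .inr c => (a : G ⧸ H c.1) = c.2
    | .inr c, .inl a => (a : G ⧸ H c.1) = c.2
    | .inr _, .inr _ => False
  symm := by
    constructor
    rintro (a | c) (b | d) h
    · exact ⟨h.1.symm, h.2.symm⟩
    · exact h
    · exact h
    · exact h.elim
  loopless := by constructor; rintro (a | c) h <;> simp_all

/-- In the coned-off Cayley graph, ordinary Cayley edges have length `1` while cone edges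
have length `1 / 2`. -/
noncomputable def conedStepLength {G : Type*} [Group G] {ι : Type*} {H : ι → Subgroup G} :
    (G ⊕ Σ i : ι, G ⧸ H i) → (G ⊕ Σ i : ι, G ⧸ H i) → ℝ
  | .inl _, .inl _ => 1
  | _, _ => 1 / 2

/-- The length of a walk in the coned-off Cayley graph, where Cayley edges have length
`1` and cone edges have length `1 / 2`. -/
noncomputable def conedWalkLength {G : Type*} [Group G] {ι : Type*} {H : ι → Subgroup G}
    {X : Set G} {u v : G ⊕ Σ i : ι, G ⧸ H i} (p : (conedOffGraph G H X).Walk u v) : ℝ :=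
  (p.darts.map fun d => conedStepLength d.toProd.1 d.toProd.2).sum

/-- The combinatorial (path) metric of the coned-off Cayley graph. -/
noncomputable def conedDist (G : Type*) [Group G] {ι : Type*} (H : ι → Subgroup G)
    (X : Set G) (u v : G ⊕ Σ i : ι, G ⧸ H i) : ℝ :=
  sInf (Set.range fun p : (conedOffGraph G H X).Walk u v => conedWalkLength p)

/-- A walk in the coned-off Cayley graph is a geodesic if it has minimal length among all
walks with the same endpoints. -/
def ConedIsGeodesic {G : Type*} [Group G] {ι : Type*} {H : ι → Subgroup G} {X : Set G}
    {u v : G ⊕ Σ i : ι, G ⧸ H i} (p : (conedOffGraph G H X).Walk u v) : Prop :=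
  ∀ q : (conedOffGraph G H X).Walk u v, conedWalkLength p ≤ conedWalkLength q

/-- The coned-off Cayley graph is hyperbolic: there is `δ ≥ 0` such that each side of
every geodesic triangle is contained in the closed `δ`-neighbourhood (with respect to its
combinatorial path metric) of the union of the other two sides. -/
def ConedOffIsHyperbolic (G : Type*) [Group G] {ι : Type*} (H : ι → Subgroup G)
    (X : Set G) : Prop :=
  ∃ δ : ℝ, 0 ≤ δ ∧ ∀ (u v w : G ⊕ Σ i : ι, G ⧸ H i) (p : (conedOffGraph G H X).Walk u v)
    (q : (conedOffGraph G H X).Walk v w) (r : (conedOffGraph G H X).Walk u w),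
    ConedIsGeodesic p → ConedIsGeodesic q → ConedIsGeodesic r →
    ∀ x ∈ r.support, ∃ y, (y ∈ p.support ∨ y ∈ q.support) ∧ conedDist G H X x y ≤ δ

namespace SimpleGraph

variable {V : Type*} {Γ : SimpleGraph V}

/-- The thinness condition in the definition of `SimpleGraph.IsHyperbolic`. -/
def GeodesicTrianglesThin (Γ : SimpleGraph V) (δ : ℕ) : Prop :=
  ∀ (u v w : V) (p : Γ.Walk u v) (q : Γ.Walk v w) (r : Γ.Walk u w),
    Γ.IsGeodesic p → Γ.IsGeodesic q → Γ.IsGeodesic r →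
    ∀ x ∈ r.support, ∃ y, (y ∈ p.support ∨ y ∈ q.support) ∧ Γ.dist x y ≤ δ

theorem IsGeodesic.reverse {u v : V} {p : Γ.Walk u v} (hp : Γ.IsGeodesic p) :
    Γ.IsGeodesic p.reverse := by
  rw [IsGeodesic, Walk.length_reverse, dist_comm]
  exact hp

theorem Walk.dist_le_length_of_mem_support {u v x : V} (p : Γ.Walk u v) (hx : x ∈ p.support) :
    Γ.dist x v ≤ p.length := by
  classical
  exact (dist_le _).trans (p.length_dropUntil_le_length hx)

namespace GeodesicTrianglesThin

variable {δ : ℕ}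

theorem exists_near_of_dist_start_le_one (hΓ : Γ.Connected) (hδ : Γ.GeodesicTrianglesThin δ)
    {a a' c : V} {S : Γ.Walk a c} {S' : Γ.Walk a' c}
    (hS : Γ.IsGeodesic S) (hS' : Γ.IsGeodesic S') (h : Γ.dist a a' ≤ 1) :
    ∀ x ∈ S.support, ∃ y ∈ S'.support, Γ.dist x y ≤ δ + 1 := by
  intro x hx
  obtain ⟨e, he⟩ := hΓ.exists_walk_length_eq_dist a a'
  obtain ⟨y, hy | hy, hxy⟩ := hδ a a' c e S' S he hS' hS x hx
  · have hya' : Γ.dist y a' ≤ 1 := (e.dist_le_length_of_mem_support hy).trans (he ▸ h)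
    exact ⟨a', S'.start_mem_support, (hΓ.dist_triangle (v := y)).trans (by omega)⟩
  · exact ⟨y, hy, by omega⟩

theorem exists_near_of_dist_end_le_one (hΓ : Γ.Connected) (hδ : Γ.GeodesicTrianglesThin δ)
    {a c c' : V} {S : Γ.Walk a c} {S' : Γ.Walk a c'}
    (hS : Γ.IsGeodesic S) (hS' : Γ.IsGeodesic S') (h : Γ.dist c c' ≤ 1) :
    ∀ x ∈ S.support, ∃ y ∈ S'.support, Γ.dist x y ≤ δ + 1 := by
  intro x hx
  obtain ⟨y, hy, hxy⟩ := exists_near_of_dist_start_le_one hΓ hδ hS.reverse hS'.reverse h x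
    (by simpa using hx)
  exact ⟨y, by simpa using hy, hxy⟩

theorem exists_near_of_broken_triangle (hΓ : Γ.Connected) (hδ : Γ.GeodesicTrianglesThin δ)
    {a₁ b₁ a₂ b₂ a₃ b₃ : V}
    {P : Γ.Walk a₁ b₁} {Q : Γ.Walk a₂ b₂} {R : Γ.Walk a₃ b₃}
    (hP : Γ.IsGeodesic P) (hQ : Γ.IsGeodesic Q) (hR : Γ.IsGeodesic R)
    (h₁ : Γ.dist a₃ a₁ ≤ 1) (h₂ : Γ.dist b₁ a₂ ≤ 1) (h₃ : Γ.dist b₂ b₃ ≤ 1) :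
    ∀ x ∈ R.support, ∃ y, (y ∈ P.support ∨ y ∈ Q.support) ∧ Γ.dist x y ≤ 4 * δ + 3 := by
  intro x hx
  obtain ⟨S₁, hS₁⟩ := hΓ.exists_walk_length_eq_dist a₁ b₃
  obtain ⟨S₂, hS₂⟩ := hΓ.exists_walk_length_eq_dist a₁ b₂
  obtain ⟨P', hP'⟩ := hΓ.exists_walk_length_eq_dist a₁ a₂
  obtain ⟨y₁, hy₁, hxy₁⟩ := exists_near_of_dist_start_le_one hΓ hδ hR hS₁ h₁ x hx
  obtain ⟨y₂, hy₂, hy₁y₂⟩ :=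
    exists_near_of_dist_end_le_one hΓ hδ hS₁ hS₂ (dist_comm.trans_le h₃) y₁ hy₁
  have hxy₂ : Γ.dist x y₂ ≤ 2 * δ + 2 := (hΓ.dist_triangle (v := y₁)).trans (by omega)
  obtain ⟨y₃, hy₃ | hy₃, hy₂y₃⟩ := hδ a₁ a₂ b₂ P' Q S₂ hP' hQ hS₂ y₂ hy₂
  · obtain ⟨y₄, hy₄, hy₃y₄⟩ :=
      exists_near_of_dist_end_le_one hΓ hδ hP' hP (dist_comm.trans_le h₂) y₃ hy₃
    have hxy₃ : Γ.dist x y₃ ≤ 3 * δ + 2 := (hΓ.dist_triangle (v := y₂)).trans (by omega)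
    exact ⟨y₄, .inl hy₄, (hΓ.dist_triangle (v := y₃)).trans (by omega)⟩
  · exact ⟨y₃, .inr hy₃, (hΓ.dist_triangle (v := y₂)).trans (by omega)⟩

end GeodesicTrianglesThin

end SimpleGraph

section CayleyGraph

variable {G : Type*} [Group G] {S : Set G}

@[simp]
theorem cayleyGraph_adj {a b : G} :
    (cayleyGraph G S).Adj a b ↔ a ≠ b ∧ (a⁻¹ * b ∈ S ∨ b⁻¹ * a ∈ S) :=
  Iff.rfl

theorem cayleyGraph_exists_walk_of_inv_mul_mem {a b : G} (h : a⁻¹ * b ∈ S) :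
    ∃ q : (cayleyGraph G S).Walk a b, q.length ≤ 1 ∧ q.support ⊆ [a, b] := by
  by_cases hab : a = b
  · subst hab
    exact ⟨.nil, by simp, by simp⟩
  · exact ⟨.cons (cayleyGraph_adj.mpr ⟨hab, .inl h⟩) .nil, by simp, by simp⟩

theorem cayleyGraph_connected (hS : Subgroup.closure S = ⊤) : (cayleyGraph G S).Connected := by
  have reachable_mul (g x : G) (hx : x ∈ S) : (cayleyGraph G S).Reachable g (g * x) := by
    obtain ⟨q, -⟩ := cayleyGraph_exists_walk_of_inv_mul_mem (S := S) (a := g) (b := g * x)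
      (by simpa using hx)
    exact ⟨q⟩
  have from_one (g : G) : (cayleyGraph G S).Reachable 1 g := by
    have hg : g ∈ Subgroup.closure S := hS ▸ Subgroup.mem_top g
    induction hg using Subgroup.closure_induction_right with
    | one => rfl
    | mul_right y _ x hx ih => exact ih.trans (reachable_mul y x hx)
    | mul_inv_cancel y _ x hx ih =>
      exact ih.trans (by simpa using (reachable_mul (y * x⁻¹) x hx).symm)
  exact ⟨fun a b => (from_one a).symm.trans (from_one b)⟩

end CayleyGraph

section ConedOffGraph

open SimpleGraph

variable {G : Type*} [Group G] {ι : Type*} {H : ι → Subgroup G} {X : Set G}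

theorem half_le_conedStepLength (x y : G ⊕ Σ i : ι, G ⧸ H i) :
    1 / 2 ≤ conedStepLength (H := H) x y := by
  rcases x with _ | _ <;> rcases y with _ | _ <;> norm_num [conedStepLength]

theorem conedStepLength_comm (x y : G ⊕ Σ i : ι, G ⧸ H i) :
    conedStepLength (H := H) x y = conedStepLength y x := by
  rcases x with _ | _ <;> rcases y with _ | _ <;> rfl

@[simp]
theorem conedWalkLength_nil {u : G ⊕ Σ i : ι, G ⧸ H i} :
    conedWalkLength (Walk.nil : (conedOffGraph G H X).Walk u u) = 0 := by
  simp [conedWalkLength]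

theorem conedWalkLength_cons {u v w : G ⊕ Σ i : ι, G ⧸ H i}
    (h : (conedOffGraph G H X).Adj u v) (p : (conedOffGraph G H X).Walk v w) :
    conedWalkLength (.cons h p) = conedStepLength u v + conedWalkLength p := by
  simp [conedWalkLength]

theorem conedWalkLength_append {u v w : G ⊕ Σ i : ι, G ⧸ H i}
    (p : (conedOffGraph G H X).Walk u v) (q : (conedOffGraph G H X).Walk v w) :
    conedWalkLength (p.append q) = conedWalkLength p + conedWalkLength q := by
  simp [conedWalkLength]

theorem conedWalkLength_reverse {u v : G ⊕ Σ i : ι, G ⧸ H i}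
    (p : (conedOffGraph G H X).Walk u v) : conedWalkLength p.reverse = conedWalkLength p := by
  simp [conedWalkLength, List.sum_reverse, Function.comp_def, conedStepLength_comm]

theorem conedWalkLength_nonneg {u v : G ⊕ Σ i : ι, G ⧸ H i}
    (p : (conedOffGraph G H X).Walk u v) : 0 ≤ conedWalkLength p :=
  List.sum_nonneg (by
    simp only [List.mem_map]
    rintro _ ⟨d, -, rfl⟩
    exact (half_le_conedStepLength _ _).trans' (by norm_num))

theorem conedDist_le_conedWalkLength {u v : G ⊕ Σ i : ι, G ⧸ H i}
    (p : (conedOffGraph G H X).Walk u v) : conedDist G H X u v ≤ conedWalkLength p :=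
  ciInf_le ⟨0, by rintro _ ⟨q, rfl⟩; exact conedWalkLength_nonneg q⟩ p

theorem conedDist_comm (u v : G ⊕ Σ i : ι, G ⧸ H i) :
    conedDist G H X u v = conedDist G H X v u := by
  have := Walk.reverse_bijective.surjective.iInf_comp
    (conedWalkLength : (conedOffGraph G H X).Walk v u → ℝ)
  simp only [conedWalkLength_reverse] at this
  exact this

theorem conedDist_triangle (hconn : (conedOffGraph G H X).Connected)
    (x y z : G ⊕ Σ i : ι, G ⧸ H i) :
    conedDist G H X x z ≤ conedDist G H X x y + conedDist G H X y z := by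
  have : Nonempty ((conedOffGraph G H X).Walk x y) := hconn x y
  have : Nonempty ((conedOffGraph G H X).Walk y z) := hconn y z
  have hsplit (p : (conedOffGraph G H X).Walk x y) (q : (conedOffGraph G H X).Walk y z) :
      conedDist G H X x z ≤ conedWalkLength p + conedWalkLength q :=
    (conedDist_le_conedWalkLength (p.append q)).trans_eq (conedWalkLength_append p q)
  have hleft (q : (conedOffGraph G H X).Walk y z) :
      conedDist G H X x z - conedWalkLength q ≤ conedDist G H X x y :=
    le_ciInf fun p => by linarith [hsplit p q]
  have hright : conedDist G H X x z - conedDist G H X x y ≤ conedDist G H X y z :=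
    le_ciInf fun q => by linarith [hleft q]
  linarith

theorem ConedIsGeodesic.reverse {u v : G ⊕ Σ i : ι, G ⧸ H i}
    {p : (conedOffGraph G H X).Walk u v} (hp : ConedIsGeodesic p) :
    ConedIsGeodesic p.reverse := fun q => by
  simpa only [conedWalkLength_reverse] using hp q.reverse

theorem ConedIsGeodesic.of_cons {u v w : G ⊕ Σ i : ι, G ⧸ H i}
    {h : (conedOffGraph G H X).Adj u v} {p : (conedOffGraph G H X).Walk v w}
    (hp : ConedIsGeodesic (.cons h p)) : ConedIsGeodesic p := fun q => by
  simpa only [conedWalkLength_cons, add_le_add_iff_left] using hp (.cons h q)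

end ConedOffGraph

section VertexSet

open SimpleGraph

variable {G : Type*} [Group G] {ι : Type*} {H : ι → Subgroup G} {X : Set G}

/-- A vertex of the coned-off graph seen as a subset of `G`: the singleton `{g}` for `g`,
the coset itself for a cone vertex. -/
def conedVertexSet : (G ⊕ Σ i : ι, G ⧸ H i) → Set G
  | .inl a => {a}
  | .inr c => {g | (g : G ⧸ H c.1) = c.2}

/-- The coned distance from a vertex to `G`. -/
noncomputable def coneHeight : (G ⊕ Σ i : ι, G ⧸ H i) → ℝ
  | .inl _ => 0
  | .inr _ => 1 / 2

@[simp]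
theorem coneHeight_inl (a : G) : coneHeight (H := H) (.inl a) = 0 :=
  rfl

theorem conedVertexSet_nonempty (x : G ⊕ Σ i : ι, G ⧸ H i) : (conedVertexSet x).Nonempty := by
  rcases x with a | c
  · exact ⟨a, rfl⟩
  · exact QuotientGroup.mk_surjective c.2

theorem conedOffGraph_adj_inr_inl_of_mem {g : G} {c : Σ i : ι, G ⧸ H i}
    (hg : g ∈ conedVertexSet (.inr c)) : (conedOffGraph G H X).Adj (.inr c) (.inl g) :=
  hg

theorem conedDist_le_half_of_mem_conedVertexSet {x : G ⊕ Σ i : ι, G ⧸ H i} {g : G}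
    (hg : g ∈ conedVertexSet x) : conedDist G H X x (.inl g) ≤ 1 / 2 := by
  rcases x with a | c
  · obtain rfl : g = a := hg
    exact (conedDist_le_conedWalkLength .nil).trans (by simp)
  · have e := conedOffGraph_adj_inr_inl_of_mem (X := X) hg
    refine (conedDist_le_conedWalkLength (.cons e .nil)).trans ?_
    simp [conedWalkLength_cons, conedStepLength]

theorem exists_relWalk_of_mem_conedVertexSet {x : G ⊕ Σ i : ι, G ⧸ H i} {a b : G}
    (ha : a ∈ conedVertexSet x) (hb : b ∈ conedVertexSet x) :
    ∃ q : (relCayleyGraph G H X).Walk a b,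
      (q.length : ℝ) ≤ 2 * coneHeight x ∧ q.support ⊆ [a, b] := by
  rcases x with g | c
  · obtain ⟨rfl, rfl⟩ : a = g ∧ b = g := ⟨ha, hb⟩
    exact ⟨.nil, by simp, by simp⟩
  · have hab : a⁻¹ * b ∈ (H c.1 : Set G) := QuotientGroup.eq.mp (ha.trans hb.symm)
    obtain ⟨q, hq, hsupp⟩ := cayleyGraph_exists_walk_of_inv_mul_mem
      (S := X ∪ ⋃ i, (H i : Set G)) (.inr (Set.mem_iUnion.mpr ⟨c.1, hab⟩))
    exact ⟨q, by norm_num [coneHeight]; exact_mod_cast hq, hsupp⟩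

theorem dist_le_one_of_mem_conedVertexSet {x : G ⊕ Σ i : ι, G ⧸ H i} {a b : G}
    (ha : a ∈ conedVertexSet x) (hb : b ∈ conedVertexSet x) :
    (relCayleyGraph G H X).dist a b ≤ 1 := by
  obtain ⟨q, hq, -⟩ := exists_relWalk_of_mem_conedVertexSet (X := X) ha hb
  have : 2 * coneHeight x ≤ 1 := by rcases x with _ | _ <;> norm_num [coneHeight]
  exact (dist_le q).trans (by exact_mod_cast hq.trans this)

def SupportsCorrespond (s : List (G ⊕ Σ i : ι, G ⧸ H i)) (t : List G) : Prop :=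
  (∀ x ∈ s, ∃ g ∈ t, g ∈ conedVertexSet x) ∧ ∀ g ∈ t, ∃ x ∈ s, g ∈ conedVertexSet x

end VertexSet

section Correspondence

open SimpleGraph

variable {G : Type*} [Group G] {ι : Type*} {H : ι → Subgroup G} {X : Set G}

theorem exists_relWalk_of_conedOffGraph_adj {u u' : G ⊕ Σ i : ι, G ⧸ H i}
    (h : (conedOffGraph G H X).Adj u u') {a : G} (ha : a ∈ conedVertexSet u) :
    ∃ a' ∈ conedVertexSet u', ∃ q : (relCayleyGraph G H X).Walk a a',
      (q.length : ℝ) + coneHeight u' ≤ conedStepLength u u' + coneHeight u ∧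
        q.support ⊆ [a, a'] := by
  rcases u with a₀ | c <;> rcases u' with a₁ | c'
  · obtain rfl : a = a₀ := ha
    have hadj : (relCayleyGraph G H X).Adj a a₁ := ⟨h.1, h.2.imp .inl .inl⟩
    exact ⟨a₁, rfl, .cons hadj .nil, by simp [conedStepLength], by simp⟩
  · obtain rfl : a = a₀ := ha
    exact ⟨a, h, .nil, by norm_num [conedStepLength, coneHeight], by simp⟩
  · obtain ⟨q, hq, hsupp⟩ := exists_relWalk_of_mem_conedVertexSet (X := X) ha h
    refine ⟨a₁, rfl, q, ?_, hsupp⟩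
    simp only [coneHeight, conedStepLength] at hq ⊢
    linarith
  · exact h.elim

theorem exists_relWalk_corresponds {u v : G ⊕ Σ i : ι, G ⧸ H i}
    (w : (conedOffGraph G H X).Walk u v) {a b : G}
    (ha : a ∈ conedVertexSet u) (hb : b ∈ conedVertexSet v) :
    ∃ p : (relCayleyGraph G H X).Walk a b,
      (p.length : ℝ) ≤ conedWalkLength w + coneHeight u + coneHeight v ∧
        SupportsCorrespond w.support p.support := by
  induction w generalizing a with
  | nil =>
    obtain ⟨q, hq, hsupp⟩ := exists_relWalk_of_mem_conedVertexSet (X := X) ha hb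
    refine ⟨q, by simp only [conedWalkLength_nil]; linarith, ?_, ?_⟩
    · simp only [Walk.support_nil, List.mem_singleton, forall_eq]
      exact ⟨a, q.start_mem_support, ha⟩
    · intro g hg
      refine ⟨_, List.mem_singleton_self _, ?_⟩
      rcases List.mem_pair.mp (hsupp hg) with rfl | rfl <;> assumption
  | @cons u u' v h w ih =>
    obtain ⟨a', ha', q, hq, hsupp⟩ := exists_relWalk_of_conedOffGraph_adj h ha
    obtain ⟨p, hp, hcorr⟩ := ih ha' hb
    refine ⟨q.append p, ?_, ?_, ?_⟩
    · rw [Walk.length_append, conedWalkLength_cons]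
      push_cast
      linarith
    · simp only [Walk.support_cons, List.mem_cons, Walk.mem_support_append_iff]
      rintro x (rfl | hx)
      · exact ⟨a, .inl q.start_mem_support, ha⟩
      · obtain ⟨g, hg, hgx⟩ := hcorr.1 x hx
        exact ⟨g, .inr hg, hgx⟩
    · simp only [Walk.mem_support_append_iff, Walk.support_cons, List.mem_cons]
      rintro g (hg | hg)
      · rcases List.mem_pair.mp (hsupp hg) with rfl | rfl
        · exact ⟨u, .inl rfl, ha⟩
        · exact ⟨u', .inr w.start_mem_support, ha'⟩
      · obtain ⟨x, hx, hgx⟩ := hcorr.2 g hg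
        exact ⟨x, .inr hx, hgx⟩

theorem exists_conedWalk_of_relCayleyGraph_adj {a b : G} (h : (relCayleyGraph G H X).Adj a b) :
    ∃ e : (conedOffGraph G H X).Walk (.inl a) (.inl b), conedWalkLength e = 1 ∧
      ∀ x ∈ e.support, a ∈ conedVertexSet x ∨ b ∈ conedVertexSet x := by
  obtain ⟨hne, hmem⟩ := h
  have : (a⁻¹ * b ∈ X ∨ b⁻¹ * a ∈ X) ∨ ∃ i, (a : G ⧸ H i) = b := by
    simp only [Set.mem_union, Set.mem_iUnion, SetLike.mem_coe] at hmem
    rcases hmem with (hX | ⟨i, hi⟩) | (hX | ⟨i, hi⟩)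
    · exact .inl (.inl hX)
    · exact .inr ⟨i, QuotientGroup.eq.mpr hi⟩
    · exact .inl (.inr hX)
    · exact .inr ⟨i, (QuotientGroup.eq.mpr hi).symm⟩
  rcases this with hX | ⟨i, hi⟩
  · refine ⟨.cons (show (conedOffGraph G H X).Adj (.inl a) (.inl b) from ⟨hne, hX⟩) .nil,
      by simp [conedWalkLength_cons, conedStepLength], ?_⟩
    simp [conedVertexSet]
  · have h₁ : (conedOffGraph G H X).Adj (.inl a) (.inr ⟨i, a⟩) := rfl
    have h₂ : (conedOffGraph G H X).Adj (.inr ⟨i, a⟩) (.inl b) := hi.symm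
    refine ⟨.cons h₁ (.cons h₂ .nil), ?_, ?_⟩
    · simp only [conedWalkLength_cons, conedWalkLength_nil, conedStepLength]
      norm_num
    · simp [conedVertexSet]

theorem exists_conedWalk_corresponds {a b : G} (p : (relCayleyGraph G H X).Walk a b) :
    ∃ w : (conedOffGraph G H X).Walk (.inl a) (.inl b),
      conedWalkLength w = p.length ∧ SupportsCorrespond w.support p.support := by
  induction p with
  | nil => exact ⟨.nil, by simp, by simp [SupportsCorrespond, conedVertexSet]⟩
  | @cons a a' b h p ih =>
    obtain ⟨e, he, hsupp⟩ := exists_conedWalk_of_relCayleyGraph_adj h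
    obtain ⟨w, hw, hcorr⟩ := ih
    refine ⟨e.append w, ?_, ?_, ?_⟩
    · rw [conedWalkLength_append, he, hw, Walk.length_cons]
      push_cast
      ring
    · simp only [Walk.mem_support_append_iff, Walk.support_cons, List.mem_cons]
      rintro x (hx | hx)
      · rcases hsupp x hx with hax | hax
        · exact ⟨a, .inl rfl, hax⟩
        · exact ⟨a', .inr p.start_mem_support, hax⟩
      · obtain ⟨g, hg, hgx⟩ := hcorr.1 x hx
        exact ⟨g, .inr hg, hgx⟩
    · simp only [Walk.mem_support_append_iff, Walk.support_cons, List.mem_cons]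
      rintro g (rfl | hg)
      · exact ⟨.inl g, .inl e.start_mem_support, rfl⟩
      · obtain ⟨x, hx, hgx⟩ := hcorr.2 g hg
        exact ⟨x, .inr hx, hgx⟩

end Correspondence

section Geodesics

open SimpleGraph

variable {G : Type*} [Group G] {ι : Type*} {H : ι → Subgroup G} {X : Set G}

theorem SimpleGraph.IsGeodesic.conedIsGeodesic {a b : G} {p : (relCayleyGraph G H X).Walk a b}
    (hp : (relCayleyGraph G H X).IsGeodesic p)
    {w : (conedOffGraph G H X).Walk (.inl a) (.inl b)} (hw : conedWalkLength w = p.length) :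
    ConedIsGeodesic w := fun q => by
  obtain ⟨p', hp', -⟩ := exists_relWalk_corresponds q rfl rfl
  simp only [coneHeight_inl, add_zero] at hp'
  calc conedWalkLength w = (relCayleyGraph G H X).dist a b := by rw [hw, hp]
    _ ≤ p'.length := by exact_mod_cast dist_le p'
    _ ≤ conedWalkLength q := hp'

theorem ConedIsGeodesic.isGeodesic_of_length_le {a b : G}
    {w : (conedOffGraph G H X).Walk (.inl a) (.inl b)} (hw : ConedIsGeodesic w)
    {t : (relCayleyGraph G H X).Walk a b} (ht : (t.length : ℝ) ≤ conedWalkLength w) :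
    (relCayleyGraph G H X).IsGeodesic t := by
  obtain ⟨p, hp⟩ := t.reachable.exists_walk_length_eq_dist
  obtain ⟨w', hw', -⟩ := exists_conedWalk_corresponds p
  have : (t.length : ℝ) ≤ (relCayleyGraph G H X).dist a b := by
    rw [← hp, ← hw']
    exact ht.trans (hw w')
  exact le_antisymm (by exact_mod_cast this) (dist_le t)

theorem conedDist_inl_inl {a b : G} (h : (relCayleyGraph G H X).Reachable a b) :
    conedDist G H X (.inl a) (.inl b) = (relCayleyGraph G H X).dist a b := by
  obtain ⟨p, hp⟩ := h.exists_walk_length_eq_dist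
  obtain ⟨w, hw, -⟩ := exists_conedWalk_corresponds p
  have : Nonempty ((conedOffGraph G H X).Walk (.inl a) (.inl b)) := ⟨w⟩
  refine le_antisymm ((conedDist_le_conedWalkLength w).trans_eq (by rw [hw, hp])) ?_
  refine le_ciInf fun q => ?_
  obtain ⟨p', hp', -⟩ := exists_relWalk_corresponds q rfl rfl
  simp only [coneHeight_inl, add_zero] at hp'
  exact (Nat.cast_le.mpr (dist_le p')).trans hp'

theorem reachable_inl_of_mem_conedVertexSet {x : G ⊕ Σ i : ι, G ⧸ H i} {g : G}
    (hg : g ∈ conedVertexSet x) : (conedOffGraph G H X).Reachable x (.inl g) := by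
  rcases x with a | c
  · obtain rfl : g = a := hg
    rfl
  · exact (conedOffGraph_adj_inr_inl_of_mem hg).reachable

theorem conedOffGraph_connected (hconn : (relCayleyGraph G H X).Connected) :
    (conedOffGraph G H X).Connected := by
  have : Nonempty G := ⟨1⟩
  refine ⟨fun x y => ?_⟩
  obtain ⟨a, ha⟩ := conedVertexSet_nonempty x
  obtain ⟨b, hb⟩ := conedVertexSet_nonempty y
  obtain ⟨p⟩ := hconn a b
  obtain ⟨w, -⟩ := exists_conedWalk_corresponds p
  exact (reachable_inl_of_mem_conedVertexSet ha).trans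
    (⟨w⟩ : (conedOffGraph G H X).Reachable _ _) |>.trans
    (reachable_inl_of_mem_conedVertexSet hb).symm

theorem conedDist_le_dist_add_one (hconn : (relCayleyGraph G H X).Connected)
    {x y : G ⊕ Σ i : ι, G ⧸ H i} {a b : G}
    (ha : a ∈ conedVertexSet x) (hb : b ∈ conedVertexSet y) :
    conedDist G H X x y ≤ (relCayleyGraph G H X).dist a b + 1 := by
  have tri := conedDist_triangle (conedOffGraph_connected hconn)
  have hxa := conedDist_le_half_of_mem_conedVertexSet (X := X) ha
  have hyb := conedDist_le_half_of_mem_conedVertexSet (X := X) hb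
  rw [conedDist_comm] at hyb
  linarith [tri x (.inl a) y, tri (.inl a) (.inl b) y, conedDist_inl_inl (hconn a b)]

theorem dist_le_conedDist_add_one (hconn : (relCayleyGraph G H X).Connected)
    {x y : G ⊕ Σ i : ι, G ⧸ H i} {a b : G}
    (ha : a ∈ conedVertexSet x) (hb : b ∈ conedVertexSet y) :
    (relCayleyGraph G H X).dist a b ≤ conedDist G H X x y + 1 := by
  have tri := conedDist_triangle (conedOffGraph_connected hconn)
  have hxa := conedDist_le_half_of_mem_conedVertexSet (X := X) ha
  have hyb := conedDist_le_half_of_mem_conedVertexSet (X := X) hb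
  rw [conedDist_comm] at hxa
  linarith [tri (.inl a) x (.inl b), tri x y (.inl b), conedDist_inl_inl (hconn a b)]

/-- A geodesic leaving a cone vertex immediately enters its coset, so dropping that first
edge leaves a geodesic starting in `G`. -/
theorem ConedIsGeodesic.exists_trim_start {u v : G ⊕ Σ i : ι, G ⧸ H i}
    {s : (conedOffGraph G H X).Walk u v} (hs : ConedIsGeodesic s) :
    ∃ a ∈ conedVertexSet u, ∃ s' : (conedOffGraph G H X).Walk (.inl a) v,
      ConedIsGeodesic s' ∧ s'.support ⊆ .inl a :: s.support ∧ s.support ⊆ u :: s'.support := by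
  rcases u with a | c
  · exact ⟨a, rfl, s, hs, List.subset_cons_self _ _, List.subset_cons_self _ _⟩
  cases s with
  | nil =>
    obtain ⟨a, ha⟩ := conedVertexSet_nonempty (.inr c)
    refine ⟨a, ha, .cons (conedOffGraph_adj_inr_inl_of_mem ha).symm .nil, fun q => ?_, by simp,
      by simp⟩
    cases q with
    | @cons _ y _ h q =>
      simp only [conedWalkLength_cons, conedWalkLength_nil, add_zero]
      linarith [half_le_conedStepLength (H := H) (.inl a) y, conedWalkLength_nonneg q,
        show conedStepLength (H := H) (.inl a) (.inr c) = 1 / 2 from rfl]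
  | cons h s =>
    rename_i y
    rcases y with a | c'
    · exact ⟨a, h, s, hs.of_cons, by simp, by simp⟩
    · exact h.elim

theorem ConedIsGeodesic.exists_trim {u v : G ⊕ Σ i : ι, G ⧸ H i}
    {s : (conedOffGraph G H X).Walk u v} (hs : ConedIsGeodesic s) :
    ∃ a ∈ conedVertexSet u, ∃ b ∈ conedVertexSet v,
      ∃ s' : (conedOffGraph G H X).Walk (.inl a) (.inl b), ConedIsGeodesic s' ∧
        s'.support ⊆ .inl a :: .inl b :: s.support ∧ s.support ⊆ u :: v :: s'.support := by
  obtain ⟨a, ha, s₁, hs₁, h₁, h₁'⟩ := hs.exists_trim_start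
  obtain ⟨b, hb, s₂, hs₂, h₂, h₂'⟩ := hs₁.reverse.exists_trim_start
  refine ⟨a, ha, b, hb, s₂.reverse, hs₂.reverse, ?_, ?_⟩
  · simp only [List.subset_def, Walk.support_reverse, List.mem_reverse, List.mem_cons] at *
    grind
  · simp only [List.subset_def, Walk.support_reverse, List.mem_reverse, List.mem_cons] at *
    grind

theorem ConedIsGeodesic.exists_relGeodesic_corresponds {u v : G ⊕ Σ i : ι, G ⧸ H i}
    {s : (conedOffGraph G H X).Walk u v} (hs : ConedIsGeodesic s) :
    ∃ a ∈ conedVertexSet u, ∃ b ∈ conedVertexSet v, ∃ t : (relCayleyGraph G H X).Walk a b,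
      (relCayleyGraph G H X).IsGeodesic t ∧ SupportsCorrespond s.support t.support := by
  obtain ⟨a, ha, b, hb, s', hs', hsub, hsub'⟩ := hs.exists_trim
  obtain ⟨t, ht, hcorr⟩ := exists_relWalk_corresponds s' rfl rfl
  simp only [coneHeight_inl, add_zero] at ht
  refine ⟨a, ha, b, hb, t, hs'.isGeodesic_of_length_le ht, fun x hx => ?_, fun g hg => ?_⟩
  · rcases List.mem_cons.mp (hsub' hx) with rfl | hx
    · exact ⟨a, t.start_mem_support, ha⟩
    rcases List.mem_cons.mp hx with rfl | hx
    · exact ⟨b, t.end_mem_support, hb⟩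
    · exact hcorr.1 x hx
  · obtain ⟨y, hy, hgy⟩ := hcorr.2 g hg
    rcases List.mem_cons.mp (hsub hy) with rfl | hy
    · exact ⟨u, s.start_mem_support, (show g = a from hgy) ▸ ha⟩
    rcases List.mem_cons.mp hy with rfl | hy
    · exact ⟨v, s.end_mem_support, (show g = b from hgy) ▸ hb⟩
    · exact ⟨y, hy, hgy⟩

end Geodesics

section Transfer

variable {G : Type*} [Group G] {ι : Type*} {H : ι → Subgroup G} {X : Set G}

theorem conedOffIsHyperbolic_of_isHyperbolic (hconn : (relCayleyGraph G H X).Connected)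
    (hhyp : (relCayleyGraph G H X).IsHyperbolic) : ConedOffIsHyperbolic G H X := by
  obtain ⟨δ, hδ⟩ := hhyp
  refine ⟨4 * δ + 4, by positivity, fun u v w p q r hp hq hr x hx => ?_⟩
  obtain ⟨a₁, ha₁, b₁, hb₁, P, hP, hPp⟩ := hp.exists_relGeodesic_corresponds
  obtain ⟨a₂, ha₂, b₂, hb₂, Q, hQ, hQq⟩ := hq.exists_relGeodesic_corresponds
  obtain ⟨a₃, ha₃, b₃, hb₃, R, hR, hRr⟩ := hr.exists_relGeodesic_corresponds
  obtain ⟨z, hz, hzx⟩ := hRr.1 x hx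
  obtain ⟨y, hy, hzy⟩ := SimpleGraph.GeodesicTrianglesThin.exists_near_of_broken_triangle
    hconn hδ hP hQ hR (dist_le_one_of_mem_conedVertexSet ha₃ ha₁)
    (dist_le_one_of_mem_conedVertexSet hb₁ ha₂) (dist_le_one_of_mem_conedVertexSet hb₂ hb₃) z hz
  have hclose {x'} (hyx' : y ∈ conedVertexSet x') : conedDist G H X x x' ≤ 4 * δ + 4 :=
    (conedDist_le_dist_add_one hconn hzx hyx').trans
      (by exact_mod_cast Nat.add_le_add_right hzy 1)
  rcases hy with hy | hy
  · obtain ⟨x', hx', hyx'⟩ := hPp.2 y hy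
    exact ⟨x', .inl hx', hclose hyx'⟩
  · obtain ⟨x', hx', hyx'⟩ := hQq.2 y hy
    exact ⟨x', .inr hx', hclose hyx'⟩

theorem isHyperbolic_of_conedOffIsHyperbolic (hconn : (relCayleyGraph G H X).Connected)
    (hhyp : ConedOffIsHyperbolic G H X) : (relCayleyGraph G H X).IsHyperbolic := by
  obtain ⟨δ, -, hδ⟩ := hhyp
  refine ⟨⌈δ⌉₊ + 1, fun u v w p q r hp hq hr x hx => ?_⟩
  obtain ⟨wp, hwp, hpc⟩ := exists_conedWalk_corresponds p
  obtain ⟨wq, hwq, hqc⟩ := exists_conedWalk_corresponds q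
  obtain ⟨wr, hwr, hrc⟩ := exists_conedWalk_corresponds r
  obtain ⟨x', hx', hxx'⟩ := hrc.2 x hx
  obtain ⟨y, hy, hx'y⟩ := hδ _ _ _ wp wq wr (hp.conedIsGeodesic hwp) (hq.conedIsGeodesic hwq)
    (hr.conedIsGeodesic hwr) x' hx'
  have hclose {z} (hzy : z ∈ conedVertexSet y) :
      (relCayleyGraph G H X).dist x z ≤ ⌈δ⌉₊ + 1 := by
    have hδ' : conedDist G H X x' y + 1 ≤ (⌈δ⌉₊ + 1 : ℕ) := by
      push_cast
      linarith [Nat.le_ceil δ]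
    exact_mod_cast (dist_le_conedDist_add_one hconn hxx' hzy).trans hδ'
  rcases hy with hy | hy
  · obtain ⟨z, hz, hzy⟩ := hpc.1 y hy
    exact ⟨z, .inl hz, hclose hzy⟩
  · obtain ⟨z, hz, hzy⟩ := hqc.1 y hy
    exact ⟨z, .inr hz, hclose hzy⟩

end Transfer

theorem relCayleyGraph_isHyperbolic_iff_conedOff_isHyperbolic_general {G : Type*} [Group G]
    {m : ℕ} (H : Fin m → Subgroup G) (X : Set G)
    (hXgen : Subgroup.closure X = ⊤) :
    (relCayleyGraph G H X).IsHyperbolic ↔ ConedOffIsHyperbolic G H X := by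
  have hconn : (relCayleyGraph G H X).Connected :=
    cayleyGraph_connected (eq_top_mono (Subgroup.closure_mono Set.subset_union_left) hXgen)
  exact ⟨conedOffIsHyperbolic_of_isHyperbolic hconn, isHyperbolic_of_conedOffIsHyperbolic hconn⟩

/-- **Lemma (Osin, Lemma 2.4, (i) ⇔ (iii)).** Let `G` be a group, `H 0, …, H (m-1)`
subgroups of `G`, and `X` a finite generating set of `G` (in the usual, non-relative,
sense). Then the relative Cayley graph of `G` with respect to the `H i` is hyperbolic if
and only if the coned-off Cayley graph of `G` with respect to the `H i` is hyperbolic. -/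
theorem relCayleyGraph_isHyperbolic_iff_conedOff_isHyperbolic {G : Type*} [Group G]
    {m : ℕ} (H : Fin m → Subgroup G) (X : Set G) (hXfin : X.Finite)
    (hXgen : Subgroup.closure X = ⊤) :
    (relCayleyGraph G H X).IsHyperbolic ↔ ConedOffIsHyperbolic G H X :=
  relCayleyGraph_isHyperbolic_iff_conedOff_isHyperbolic_general H X hXgen
end

section
/- Let G be a group acting by graph automorphisms on connected graphs Γ₁ and Γ₂, each with a finite number of orbits of edges. Suppose there is a bijection β : V(Γ₁) → V(Γ₂) between the vertex sets which is G-equivariant, i.e. β(g·v) = g·β(v) for all g ∈ G and all vertices v of Γ₁. Then Γ₁ and Γ₂ (each equipped with the combinatorial metric) are quasi-isometric. -/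
/-- `f` is a quasi-isometry from `(α, d₁)` to `(β, d₂)`: for some constants `λ > 0`,
`c ≥ 0`, `ε ≥ 0`, distances are distorted by at most a factor `λ` and an additive
constant `c`, and every point of `β` is within distance `ε` of the image of `f`. -/
def IsQuasiIsometry {α β : Type*} (d₁ : α → α → ℝ) (d₂ : β → β → ℝ) (f : α → β) : Prop :=
  ∃ lam c ε : ℝ, 0 < lam ∧ 0 ≤ c ∧ 0 ≤ ε ∧
    (∀ x y : α, (1 / lam) * d₁ x y - c ≤ d₂ (f x) (f y) ∧
      d₂ (f x) (f y) ≤ lam * d₁ x y + c) ∧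
    (∀ z : β, ∃ x : α, d₂ (f x) z ≤ ε)

/-- Two "metric spaces" (given by distance functions) are quasi-isometric if there is a
quasi-isometry from the first one to the second one. -/
def QuasiIsometric {α β : Type*} (d₁ : α → α → ℝ) (d₂ : β → β → ℝ) : Prop :=
  ∃ f : α → β, IsQuasiIsometry d₁ d₂ f

section Aux
variable {G V₁ V₂ : Type*} [Group G] [MulAction G V₁] [MulAction G V₂]

/-- distance invariance under action by automorphisms -/
lemma dist_smul_eq (Γ : SimpleGraph V₂)
    (haut : ∀ (g : G) (v w : V₂), Γ.Adj v w → Γ.Adj (g • v) (g • w))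
    (g : G) (x y : V₂) : Γ.dist (g • x) (g • y) = Γ.dist x y := by
  have key : ∀ (h : G) (a b : V₂), Γ.dist (h • a) (h • b) ≤ Γ.dist a b := by
    intro h a b
    by_cases hr : Γ.Reachable a b
    · obtain ⟨p, hp⟩ := hr.exists_walk_length_eq_dist
      have := SimpleGraph.dist_le (p.map ⟨(h • ·), fun ha => haut h _ _ ha⟩)
      rwa [SimpleGraph.Walk.length_map, hp] at this
    · have hr' : ¬Γ.Reachable (h • a) (h • b) := fun hw => hr (by
        have := hw.map (f := ⟨(h⁻¹ • ·), fun ha => haut h⁻¹ _ _ ha⟩)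
        simpa using (show Γ.Reachable (h⁻¹ • h • a) (h⁻¹ • h • b) from this))
      simp [SimpleGraph.dist_eq_zero_of_not_reachable hr,
        SimpleGraph.dist_eq_zero_of_not_reachable hr']
  refine le_antisymm (key g x y) ?_
  have := key g⁻¹ (g • x) (g • y)
  simpa using this

lemma dist_le_mul (Γ₁ : SimpleGraph V₁) (Γ₂ : SimpleGraph V₂)
    (hconn₂ : Γ₂.Connected)
    (haut₂ : ∀ (g : G) (v w : V₂), Γ₂.Adj v w → Γ₂.Adj (g • v) (g • w))
    (horb₁ : ∃ s : Finset (Sym2 V₁), ∀ e ∈ Γ₁.edgeSet,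
      ∃ g : G, ∃ e' ∈ s, Sym2.map (fun v => g • v) e' = e)
    (β : V₁ → V₂) (hβ : ∀ (g : G) (v : V₁), β (g • v) = g • β v) :
    ∃ K : ℕ, ∀ u v : V₁, ∀ p : Γ₁.Walk u v, Γ₂.dist (β u) (β v) ≤ K * p.length := by
  obtain ⟨s, hs⟩ := horb₁
  set f : Sym2 V₁ → ℕ := Sym2.lift ⟨fun a b => Γ₂.dist (β a) (β b),
    fun a b => SimpleGraph.dist_comm⟩ with hf
  refine ⟨s.sup f, ?_⟩
  have hadj : ∀ u v : V₁, Γ₁.Adj u v → Γ₂.dist (β u) (β v) ≤ s.sup f := by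
    intro u v huv
    obtain ⟨g, e', he's, he'⟩ := hs s(u, v) huv
    induction e' with
    | h a b =>
      simp only [Sym2.map_pair_eq, Sym2.eq, Sym2.rel_iff'] at he'
      have hab : Γ₂.dist (β (g • a)) (β (g • b)) = f s(a, b) := by
        rw [hβ, hβ, dist_smul_eq Γ₂ haut₂]; rfl
      rcases he' with ⟨rfl, rfl⟩ | ⟨rfl, rfl⟩
      · exact hab ▸ Finset.le_sup he's
      · calc Γ₂.dist (β (g • b)) (β (g • a)) = Γ₂.dist (β (g • a)) (β (g • b)) :=
              SimpleGraph.dist_comm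
          _ ≤ s.sup f := hab ▸ Finset.le_sup he's
  intro u v p
  induction p with
  | nil => simp
  | cons h q ih =>
    calc Γ₂.dist (β _) (β _) ≤ Γ₂.dist (β _) (β _) + Γ₂.dist (β _) (β _) :=
          hconn₂.dist_triangle
      _ ≤ s.sup f + s.sup f * q.length := add_le_add (hadj _ _ h) ih
      _ ≤ s.sup f * (q.length + 1) := by ring_nf; omega
      _ = s.sup f * (SimpleGraph.Walk.cons h q).length := by
          rw [SimpleGraph.Walk.length_cons]

end Aux


/-- **Lemma (Osin, Lemma 3.1; a version of the Švarc–Milnor lemma).** Let a group `G` act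
by graph automorphisms on connected graphs `Γ₁` and `Γ₂`, each with finitely many orbits
of edges. If there is a `G`-equivariant bijection `β` between the vertex sets, then `Γ₁`
and `Γ₂` (with their combinatorial metrics) are quasi-isometric. -/
theorem quasiIsometric_of_equivariant_vertex_bijection {G V₁ V₂ : Type*} [Group G]
    [MulAction G V₁] [MulAction G V₂] (Γ₁ : SimpleGraph V₁) (Γ₂ : SimpleGraph V₂)
    (hconn₁ : Γ₁.Connected) (hconn₂ : Γ₂.Connected)
    (haut₁ : ∀ (g : G) (v w : V₁), Γ₁.Adj v w → Γ₁.Adj (g • v) (g • w))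
    (haut₂ : ∀ (g : G) (v w : V₂), Γ₂.Adj v w → Γ₂.Adj (g • v) (g • w))
    (horb₁ : ∃ s : Finset (Sym2 V₁), ∀ e ∈ Γ₁.edgeSet,
      ∃ g : G, ∃ e' ∈ s, Sym2.map (fun v => g • v) e' = e)
    (horb₂ : ∃ s : Finset (Sym2 V₂), ∀ e ∈ Γ₂.edgeSet,
      ∃ g : G, ∃ e' ∈ s, Sym2.map (fun v => g • v) e' = e)
    (β : V₁ ≃ V₂) (hβ : ∀ (g : G) (v : V₁), β (g • v) = g • β v) :
    QuasiIsometric (fun u v : V₁ => (Γ₁.dist u v : ℝ))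
      (fun u v : V₂ => (Γ₂.dist u v : ℝ)) := by
  obtain ⟨K₁, hK₁⟩ := dist_le_mul Γ₁ Γ₂ hconn₂ haut₂ horb₁ (β : V₁ → V₂) hβ
  have hβsymm : ∀ (g : G) (v : V₂), β.symm (g • v) = g • β.symm v := by
    intro g v
    apply β.injective
    rw [Equiv.apply_symm_apply, hβ, Equiv.apply_symm_apply]
  obtain ⟨K₂, hK₂⟩ := dist_le_mul Γ₂ Γ₁ hconn₁ haut₁ horb₂ (β.symm : V₂ → V₁) hβsymm
  have hup : ∀ u v : V₁, Γ₂.dist (β u) (β v) ≤ K₁ * Γ₁.dist u v := by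
    intro u v
    obtain ⟨p, hp⟩ := hconn₁.exists_walk_length_eq_dist u v
    exact hp ▸ hK₁ u v p
  have hlow : ∀ u v : V₁, Γ₁.dist u v ≤ K₂ * Γ₂.dist (β u) (β v) := by
    intro u v
    obtain ⟨p, hp⟩ := hconn₂.exists_walk_length_eq_dist (β u) (β v)
    have := hp ▸ hK₂ (β u) (β v) p
    simpa using this
  set lam : ℝ := (max K₁ K₂ : ℕ) + 1 with hlam
  have hlampos : (0 : ℝ) < lam := by positivity
  refine ⟨β, lam, 0, 0, hlampos, le_refl 0, le_refl 0, fun x y => ⟨?_, ?_⟩, fun z => ⟨β.symm z, by simp⟩⟩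
  · rw [div_mul_eq_mul_div, one_mul, sub_zero, div_le_iff₀ hlampos]
    calc (Γ₁.dist x y : ℝ) ≤ (K₂ : ℝ) * Γ₂.dist (β x) (β y) := by
          exact_mod_cast hlow x y
      _ ≤ Γ₂.dist (β x) (β y) * lam := by
          rw [mul_comm]
          apply mul_le_mul_of_nonneg_left _ (by positivity)
          rw [hlam]
          exact_mod_cast Nat.le_succ_of_le (le_max_right K₁ K₂)
  · calc (Γ₂.dist (β x) (β y) : ℝ) ≤ (K₁ : ℝ) * Γ₁.dist x y := by
          exact_mod_cast hup x y
      _ ≤ lam * Γ₁.dist x y + 0 := by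
          rw [add_zero]
          apply mul_le_mul_of_nonneg_right _ (by positivity)
          rw [hlam]
          exact_mod_cast Nat.le_succ_of_le (le_max_left K₁ K₂)
end

section
/- Let F be a free group of rank 2 (or more generally a non-cyclic finitely generated free group), and let G = ⟨F, t | t⁻¹ft = f for all f ∈ [F,F]⟩ be the HNN-extension of F with both associated subgroups equal to the commutator subgroup [F,F] and with the identity as the associated isomorphism. Then G is not finitely presented. -/
/-- A group is finitely presented if it is isomorphic to the quotient of a finitely
generated free group by the normal closure of a finite set. -/
def IsFinitelyPresented (G : Type*) [Group G] : Prop :=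
  ∃ (n : ℕ) (R : Finset (FreeGroup (Fin n))),
    Nonempty (G ≃* FreeGroup (Fin n) ⧸ Subgroup.normalClosure (R : Set (FreeGroup (Fin n))))

/-!
If the HNN-extension `G` of a finitely generated free group `F` along the identity of a subgroup
`A` is finitely presented, then among its defining relators `[t, a]`, `a ∈ A`, finitely many
already suffice, say those with `a` in a finite set `S ⊆ A`. These relators also hold in the
HNN-extension along `⟨S⟩`, so every `a ∈ A` commutes with the stable letter there, and Britton's
lemma puts `a` in `⟨S⟩`. Hence `A` is finitely generated.

For `A = [F, F]` this is impossible: sending two free generators to the generators of the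
lamplighter group `ℤ/2 ≀ ℤ` maps `[F, F]` into the base group, where every finitely generated
subgroup is finite, yet the commutators `[x, y ^ m]` have infinitely many distinct images.
-/

open scoped commutatorElement

namespace Subgroup

variable {G : Type*} [Group G]

theorem FG.map {H : Type*} [Group H] {K : Subgroup G} (hK : K.FG) (f : G →* H) :
    (K.map f).FG := by
  classical
  obtain ⟨S, rfl⟩ := hK
  exact ⟨S.image f, by rw [Finset.coe_image, MonoidHom.map_closure]⟩

/-- A group of exponent two is abelian, so this is the finiteness of finitely generated abelian
torsion groups. -/
theorem finite_of_fg_of_sq_eq_one {H : Subgroup G} (hH : H.FG) (hsq : ∀ x ∈ H, x ^ 2 = 1) :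
    Finite H := by
  have hsq' : ∀ x : H, x ^ 2 = 1 := fun x => Subtype.ext (hsq x x.2)
  let _ : CommGroup H :=
    { mul_comm := Commute.of_orderOf_dvd_two fun g => orderOf_dvd_of_pow_eq_one (hsq' g) }
  have : Group.FG H := (Group.fg_iff_subgroup_fg H).2 hH
  exact CommGroup.finite_of_fg_isMulTorsion H fun x =>
    isOfFinOrder_iff_pow_eq_one.2 ⟨2, two_pos, hsq' x⟩

theorem exists_finite_subset_of_mem_normalClosure {S : Set G} {x : G}
    (hx : x ∈ normalClosure S) : ∃ T ⊆ S, T.Finite ∧ x ∈ normalClosure T := by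
  induction hx using closure_induction with
  | mem x hx =>
    obtain ⟨a, ha, hconj⟩ := Group.mem_conjugatesOfSet_iff.1 hx
    exact ⟨{a}, Set.singleton_subset_iff.2 ha, Set.finite_singleton a,
      conjugatesOfSet_subset_normalClosure (Group.mem_conjugatesOfSet_iff.2 ⟨a, rfl, hconj⟩)⟩
  | one => exact ⟨∅, Set.empty_subset S, Set.finite_empty, one_mem _⟩
  | mul x y _ _ hx hy =>
    obtain ⟨T₁, hT₁S, hT₁, hx⟩ := hx
    obtain ⟨T₂, hT₂S, hT₂, hy⟩ := hy
    exact ⟨T₁ ∪ T₂, Set.union_subset hT₁S hT₂S, hT₁.union hT₂,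
      mul_mem (normalClosure_mono Set.subset_union_left hx)
        (normalClosure_mono Set.subset_union_right hy)⟩
  | inv x _ hx =>
    obtain ⟨T, hTS, hT, hx⟩ := hx
    exact ⟨T, hTS, hT, inv_mem hx⟩

theorem IsFinitelyNormallyGenerated.exists_finite_subset {S : Set G}
    (h : (normalClosure S).IsFinitelyNormallyGenerated) :
    ∃ T ⊆ S, T.Finite ∧ normalClosure T = normalClosure S := by
  obtain ⟨U, hU, hUS⟩ := h
  choose! T hTS hT hmem using fun u (hu : u ∈ U) =>
    exists_finite_subset_of_mem_normalClosure (hUS ▸ subset_normalClosure hu)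
  refine ⟨⋃ u ∈ U, T u, Set.iUnion₂_subset hTS, hU.biUnion hT,
    le_antisymm (normalClosure_mono (Set.iUnion₂_subset hTS)) ?_⟩
  rw [← hUS]
  exact normalClosure_le_normal fun u hu =>
    normalClosure_mono (Set.subset_biUnion_of_mem hu) (hmem u hu)

end Subgroup

namespace FreeGroup

variable {X Y : Type*}

theorem lift_sumElim_map_inr (w : X → FreeGroup Y) (g : FreeGroup Y) :
    lift (Sum.elim w of) (map Sum.inr g) = g := by
  induction g using FreeGroup.induction_on <;> simp_all

theorem ker_lift_sumElim [Finite X] (w : X → FreeGroup Y) :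
    (lift (Sum.elim w of)).ker =
      Subgroup.normalClosure (Set.range fun x => of (Sum.inl x) * (map Sum.inr (w x))⁻¹) := by
  set N := Subgroup.normalClosure (Set.range fun x => of (Sum.inl x) * (map Sum.inr (w x))⁻¹)
  refine le_antisymm (fun s hs => ?_) (Subgroup.normalClosure_le_normal ?_)
  · have hretract : (QuotientGroup.mk' N).comp ((map Sum.inr).comp (lift (Sum.elim w of))) =
        QuotientGroup.mk' N := by
      ext (x | y)
      · exact ((QuotientGroup.eq_iff_div_mem).2 <| by
          simpa [div_eq_mul_inv] using Subgroup.subset_normalClosure (Set.mem_range_self x)).symm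
      · simp
    rw [← QuotientGroup.eq_one_iff, ← QuotientGroup.mk'_apply, ← hretract]
    simp [MonoidHom.mem_ker.1 hs]
  · rintro _ ⟨x, rfl⟩
    simp [lift_sumElim_map_inr]

end FreeGroup

theorem IsFinitelyPresented.group_isFinitelyPresented {G : Type*} [Group G]
    (h : IsFinitelyPresented G) : Group.IsFinitelyPresented G := by
  obtain ⟨n, R, ⟨e⟩⟩ := h
  have : Group.IsFinitelyPresented (FreeGroup (Fin n) ⧸ Subgroup.normalClosure (R : Set _)) :=
    .quotient _ ⟨R, R.finite_toSet, rfl⟩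
  exact .equiv e.symm

/-- `π ∘ κ = φ ∘ ρ` for a finite presentation `φ` and retractions `κ`, `ρ` from the free group on
both generating sets, and `ker ρ` is normally generated by finitely many Tietze relators; so
`ker (π ∘ κ)` is finitely normally generated, hence so is its image `ker π` under `κ`. -/
theorem Group.IsFinitelyPresented.ker_isFinitelyNormallyGenerated {G X : Type*} [Group G]
    [Group.IsFinitelyPresented G] [Finite X] {π : FreeGroup X →* G}
    (hπ : Function.Surjective π) : π.ker.IsFinitelyNormallyGenerated := by
  obtain ⟨n, φ, hφ, hφker⟩ := ‹Group.IsFinitelyPresented G›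
  choose ψ hψ using fun x => hφ (π (FreeGroup.of x))
  choose χ hχ using fun i => hπ (φ (FreeGroup.of i))
  set ρ := FreeGroup.lift (Sum.elim ψ FreeGroup.of)
  set κ : FreeGroup (X ⊕ Fin n) →* FreeGroup X := FreeGroup.lift (Sum.elim FreeGroup.of χ)
  have hρ : Function.Surjective ρ := fun g =>
    ⟨FreeGroup.map Sum.inr g, FreeGroup.lift_sumElim_map_inr ψ g⟩
  have hκ : Function.Surjective κ := fun g => ⟨FreeGroup.map Sum.inl g, by
    induction g using FreeGroup.induction_on <;> simp_all [κ]⟩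
  have hcomm : π.comp κ = φ.comp ρ := by ext (x | i) <;> simp [κ, ρ, hψ, hχ]
  have hker : (π.ker.comap κ).IsFinitelyNormallyGenerated := by
    rw [MonoidHom.comap_ker, hcomm, ← MonoidHom.comap_ker]
    exact hφker.comap hρ ⟨_, Set.finite_range _, (FreeGroup.ker_lift_sumElim ψ).symm⟩
  simpa only [Subgroup.map_comap_eq_self_of_surjective hκ] using hker.map hκ

namespace RegularWreathProduct

variable {D Q : Type*} [Group D] [Group Q]

theorem sq_eq_one_of_right_eq_one (hD : ∀ d : D, d ^ 2 = 1) {w : D ≀ᵣ Q} (hw : w.right = 1) :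
    w ^ 2 = 1 := by
  ext x
  · simpa [pow_two, hw] using hD (w.left x)
  · simp [pow_two, hw]

theorem commutatorElement_inl_left (f : Q → D) (q : Q) :
    (⁅(⟨f, 1⟩ : D ≀ᵣ Q), inl q⁆).left = f / fun x => f (q⁻¹ * x) := by
  ext x
  simp [commutatorElement_def, mul_def, div_eq_mul_inv]

theorem commutatorElement_mulSingle_inl_injective [DecidableEq Q] {d : D} (hd : d ≠ 1) :
    Function.Injective fun q : Q => ⁅(⟨Pi.mulSingle 1 d, 1⟩ : D ≀ᵣ Q), (inl q : D ≀ᵣ Q)⁆ := by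
  intro q q' h
  have hshift : (fun x => (Pi.mulSingle 1 d : Q → D) (q⁻¹ * x)) =
      fun x => (Pi.mulSingle 1 d : Q → D) (q'⁻¹ * x) := by
    simpa only [commutatorElement_inl_left, div_right_inj] using congrArg left h
  by_contra hne
  have := congrFun hshift q
  simp [inv_mul_eq_one, Ne.symm hne, hd] at this

end RegularWreathProduct

theorem FreeGroup.not_fg_commutator {α : Type*} [Nontrivial α] :
    ¬ (commutator (FreeGroup α)).FG := by
  classical
  intro hfg
  obtain ⟨x, y, hxy⟩ := exists_pair_ne α
  let a : Multiplicative (ZMod 2) ≀ᵣ Multiplicative ℤ := ⟨Pi.mulSingle 1 (.ofAdd 1), 1⟩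
  let b : Multiplicative (ZMod 2) ≀ᵣ Multiplicative ℤ := RegularWreathProduct.inl (.ofAdd 1)
  let θ := lift fun z => if z = x then a else if z = y then b else 1
  set K := (commutator (FreeGroup α)).map θ
  have hK_right : K ≤ RegularWreathProduct.rightHom.ker := by
    rw [Subgroup.map_le_iff_le_comap, MonoidHom.comap_ker]
    exact Abelianization.commutator_subset_ker _
  have hK_finite : Finite K := Subgroup.finite_of_fg_of_sq_eq_one (hfg.map θ) fun w hw =>
    RegularWreathProduct.sq_eq_one_of_right_eq_one (by decide) (hK_right hw)
  have hθ (m : ℤ) : θ ⁅of x, of y ^ m⁆ = ⁅a, RegularWreathProduct.inl (.ofAdd m)⁆ := by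
    have hb : b ^ m = RegularWreathProduct.inl (.ofAdd m) := by
      rw [← map_zpow, ← ofAdd_zsmul, smul_eq_mul, mul_one]
    simp [θ, hxy.symm, map_commutatorElement, hb]
  have hmem (m : ℤ) : ⁅a, RegularWreathProduct.inl (.ofAdd m)⁆ ∈ K :=
    ⟨_, Subgroup.commutator_mem_commutator (Subgroup.mem_top _) (Subgroup.mem_top _), hθ m⟩
  exact Set.infinite_of_injective_forall_mem
    ((RegularWreathProduct.commutatorElement_mulSingle_inl_injective (by decide)).comp
      Multiplicative.ofAdd.injective) hmem (Set.finite_coe_iff.mp hK_finite)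

namespace HNNExtension

section Britton

variable {G : Type*} [Group G]

/-- For `g ∉ A` the word `t g t⁻¹` is reduced, so by Britton's lemma it does not lie in `G`. -/
theorem mem_of_t_mul_of_mul_inv_t_mem_range {A B : Subgroup G} {φ : A ≃* B} {g : G}
    (h : t * of g * t⁻¹ ∈ (of : G →* HNNExtension G A B φ).range) : g ∈ A := by
  by_contra hg
  let w : NormalWord.ReducedWord G A B :=
    ⟨1, [(1, g), (-1, 1)], List.isChain_pair.2 fun hgA => absurd hgA hg⟩
  have hw : w.prod φ = t * of g * t⁻¹ := by
    simp [w, NormalWord.ReducedWord.prod, mul_assoc]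
  simpa [w] using ReducedWord.toList_eq_nil_of_mem_of_range φ w (hw ▸ h)

theorem commute_t_of_iff {A : Subgroup G} {g : G} :
    Commute (t : HNNExtension G A A (MulEquiv.refl A)) (of g) ↔ g ∈ A := by
  refine ⟨fun h => mem_of_t_mul_of_mul_inv_t_mem_range (φ := MulEquiv.refl A) ⟨g, ?_⟩,
    fun hg => t_mul_of (⟨g, hg⟩ : A)⟩
  rw [h.eq, mul_inv_cancel_right]

end Britton

variable {α : Type*}

/-- The letter `Sum.inr ()` plays the role of the stable letter `t`. -/
def relator (c : FreeGroup α) : FreeGroup (α ⊕ Unit) :=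
  ⁅(FreeGroup.of (Sum.inr ()) : FreeGroup (α ⊕ Unit)), FreeGroup.map Sum.inl c⁆

variable (A : Subgroup (FreeGroup α))

def presentationHom :
    FreeGroup (α ⊕ Unit) →* HNNExtension (FreeGroup α) A A (MulEquiv.refl A) :=
  FreeGroup.lift (Sum.elim (fun a => of (FreeGroup.of a)) fun _ => t)

theorem presentationHom_map_inl (g : FreeGroup α) :
    presentationHom A (FreeGroup.map Sum.inl g) = of g := by
  induction g using FreeGroup.induction_on <;> simp_all [presentationHom]

theorem presentationHom_of_inr (u : Unit) :
    presentationHom A (FreeGroup.of (Sum.inr u)) = t := by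
  simp [presentationHom]

theorem presentationHom_surjective : Function.Surjective (presentationHom A) := by
  intro g
  induction g using induction_on with
  | of g => exact ⟨_, presentationHom_map_inl A g⟩
  | t => exact ⟨_, presentationHom_of_inr A ()⟩
  | mul x y hx hy =>
    obtain ⟨a, rfl⟩ := hx
    obtain ⟨b, rfl⟩ := hy
    exact ⟨a * b, map_mul _ a b⟩
  | inv x hx =>
    obtain ⟨a, rfl⟩ := hx
    exact ⟨a⁻¹, map_inv _ a⟩

theorem presentationHom_relator_eq_one_iff {c : FreeGroup α} :
    presentationHom A (relator c) = 1 ↔ c ∈ A := by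
  rw [relator, map_commutatorElement, presentationHom_of_inr, presentationHom_map_inl,
    commutatorElement_eq_one_iff_commute, commute_t_of_iff]

theorem ker_presentationHom :
    (presentationHom A).ker = Subgroup.normalClosure (relator '' A) := by
  refine le_antisymm (fun s hs => ?_) (Subgroup.normalClosure_le_normal ?_)
  · set M := Subgroup.normalClosure (relator '' (A : Set (FreeGroup α)))
    let mk := QuotientGroup.mk' M
    have hcomm (a : A) : mk (FreeGroup.of (Sum.inr ())) * mk (FreeGroup.map Sum.inl a) =
        mk (FreeGroup.map Sum.inl (MulEquiv.refl A a : FreeGroup α)) *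
          mk (FreeGroup.of (Sum.inr ())) := by
      have : mk (relator a) = 1 :=
        (QuotientGroup.eq_one_iff _).2 (Subgroup.subset_normalClosure ⟨a, a.2, rfl⟩)
      rwa [relator, map_commutatorElement, commutatorElement_eq_one_iff_mul_comm] at this
    let Ψ := lift (mk.comp (FreeGroup.map Sum.inl)) (mk (FreeGroup.of (Sum.inr ()))) hcomm
    have hΨ : Ψ.comp (presentationHom A) = mk := by
      ext (a | u) <;> simp [Ψ, presentationHom]
    rw [← QuotientGroup.eq_one_iff]
    change mk s = 1
    simp [← hΨ, MonoidHom.mem_ker.1 hs]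
  · rintro _ ⟨c, hc, rfl⟩
    exact (presentationHom_relator_eq_one_iff A).2 hc

theorem fg_of_isFinitelyPresented [Finite α]
    (h : IsFinitelyPresented (HNNExtension (FreeGroup α) A A (MulEquiv.refl A))) : A.FG := by
  have := h.group_isFinitelyPresented
  have hker := Group.IsFinitelyPresented.ker_isFinitelyNormallyGenerated
    (presentationHom_surjective A)
  rw [ker_presentationHom] at hker
  obtain ⟨S, hSA, hS, hSker⟩ := Set.exists_subset_image_finite_and.1 hker.exists_finite_subset
  refine ⟨hS.toFinset, le_antisymm ?_ fun c hc => ?_⟩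
  · rwa [Set.Finite.coe_toFinset, Subgroup.closure_le]
  · have hc' : relator c ∈ Subgroup.normalClosure (relator '' S) :=
      hSker ▸ Subgroup.subset_normalClosure ⟨c, hc, rfl⟩
    rw [Set.Finite.coe_toFinset, ← presentationHom_relator_eq_one_iff, ← MonoidHom.mem_ker,
      ker_presentationHom]
    exact Subgroup.normalClosure_mono (Set.image_mono Subgroup.subset_closure) hc'

end HNNExtension

/-- **(Used in the proof of Osin, Corollary 1.2.)** Let `F` be a non-cyclic finitely
generated free group and let `G = ⟨F, t | t⁻¹ f t = f, f ∈ [F, F]⟩` be the HNN-extension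
of `F` with both associated subgroups equal to the commutator subgroup `[F, F]` and the
identity as the associated isomorphism. Then `G` is not finitely presented. -/
theorem hnn_commutator_not_finitely_presented {α : Type} [Finite α]
    (hα : 2 ≤ Nat.card α) :
    ¬ IsFinitelyPresented
        (HNNExtension (FreeGroup α) (commutator (FreeGroup α)) (commutator (FreeGroup α))
          (MulEquiv.refl (commutator (FreeGroup α)))) := by
  have : Nontrivial α := Finite.one_lt_card_iff_nontrivial.1 hα
  exact fun h => FreeGroup.not_fg_commutator (HNNExtension.fg_of_isFinitelyPresented _ h)
end

section
/- Let F be a finitely generated free group and A a finitely generated subgroup of F. Then F is weakly hyperbolic relative to A. -/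
namespace SimpleGraph

variable {V V' : Type*} {G : SimpleGraph V} {G' : SimpleGraph V'} {u v w x : V}

theorem dist_le_one_of_eq_or_adj (h : u = v ∨ G.Adj u v) : G.dist u v ≤ 1 := by
  rcases h with rfl | h
  · simp
  · exact (dist_eq_one_iff_adj.mpr h).le

theorem Hom.dist_le (f : G →g G') (h : G.Reachable u v) : G'.dist (f u) (f v) ≤ G.dist u v := by
  obtain ⟨W, hW⟩ := h.exists_walk_length_eq_dist
  simpa [hW] using SimpleGraph.dist_le (W.map f)

theorem Iso.dist_eq (f : G ≃g G') (u v : V) : G'.dist (f u) (f v) = G.dist u v := by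
  by_cases h : G.Reachable u v
  · exact le_antisymm (f.toHom.dist_le h) (by simpa using f.symm.toHom.dist_le (h.map f.toHom))
  · rw [dist_eq_zero_of_not_reachable h, dist_eq_zero_of_not_reachable (mt Iso.reachable_iff.mp h)]

/-- In a tree, this is the vertex set of the path from `u` to `v`. -/
def segment (G : SimpleGraph V) (u v : V) : Set V :=
  {x | ∀ W : G.Walk u v, x ∈ W.support}

theorem start_mem_segment : u ∈ G.segment u v := fun W => W.start_mem_support

theorem segment_comm (G : SimpleGraph V) (u v : V) : G.segment u v = G.segment v u := by
  suffices ∀ u v, G.segment u v ⊆ G.segment v u from (this u v).antisymm (this v u)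
  intro u v x hx W
  simpa using hx W.reverse

theorem segment_self_subset : G.segment u u ⊆ {u} := fun x hx => by
  simpa using hx Walk.nil

theorem Adj.segment_subset (h : G.Adj u v) : G.segment u v ⊆ {u, v} := fun x hx => by
  simpa using hx (Walk.cons h Walk.nil)

theorem Reachable.dist_le_of_mem_segment (h : G.Reachable u v) (hx : x ∈ G.segment u v) :
    G.dist u x ≤ G.dist u v := by
  classical
  obtain ⟨W, hW⟩ := h.exists_walk_length_eq_dist
  calc G.dist u x ≤ (W.takeUntil x (hx W)).length := dist_le _
    _ ≤ G.dist u v := hW ▸ W.length_takeUntil_le_length _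

theorem Iso.apply_mem_segment (f : G ≃g G') (hx : x ∈ G.segment u v) :
    f x ∈ G'.segment (f u) (f v) := by
  intro W
  have := hx ((W.map f.symm.toHom).copy (f.symm_apply_apply u) (f.symm_apply_apply v))
  simp only [Walk.support_copy, Walk.support_map, List.mem_map] at this
  obtain ⟨y, hy, rfl⟩ := this
  simpa using hy

theorem IsAcyclic.support_subset_segment (hG : G.IsAcyclic) {p : G.Walk u v} (hp : p.IsPath) :
    ∀ x ∈ p.support, x ∈ G.segment u v := by
  classical
  intro x hx W
  have : (⟨p, hp⟩ : G.Path u v) = ⟨W.bypass, W.bypass_isPath⟩ :=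
    (hG.subsingleton_path u v).elim _ _
  rw [Subtype.mk.injEq] at this
  exact W.support_bypass_subset_support (this ▸ hx)

theorem IsTree.segment_subset_union (hG : G.IsTree) (u v w : V) :
    G.segment u w ⊆ G.segment u v ∪ G.segment v w := by
  obtain ⟨p, hp⟩ := hG.connected.exists_isPath u v
  obtain ⟨q, hq⟩ := hG.connected.exists_isPath v w
  intro x hx
  exact ((p.mem_support_append_iff q).mp (hx (p.append q))).imp
    (hG.isAcyclic.support_subset_segment hp x) (hG.isAcyclic.support_subset_segment hq x)

theorem Walk.exists_adj_of_support_subset_union {S T : Set V} :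
    ∀ {u v : V} (W : G.Walk u v), u ∈ S → v ∈ T → (∀ x ∈ W.support, x ∈ S ∨ x ∈ T) →
      ∃ y ∈ S, ∃ z ∈ W.support, z ∈ T ∧ (y = z ∨ G.Adj y z)
  | _, _, .nil, hu, hv, _ => ⟨_, hu, _, Walk.start_mem_support _, hv, Or.inl rfl⟩
  | _, _, .cons h W, hu, hv, hW => by
    rcases hW _ (List.mem_cons_of_mem _ W.start_mem_support) with hS | hT
    · obtain ⟨y, hy, z, hz, hzT, hyz⟩ :=
        W.exists_adj_of_support_subset_union hS hv fun x hx => hW x (by simp [hx])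
      exact ⟨y, hy, z, by simp [hz], hzT, hyz⟩
    · exact ⟨_, hu, _, by simp, hT, Or.inr h⟩

theorem Walk.dist_le_of_mem_support_append {p q : V} (r₁ : G.Walk u x) (r₂ : G.Walk x w)
    (hr : (r₁.append r₂).length = G.dist u w) (hp : p ∈ r₁.support) (hq : q ∈ r₂.support) :
    G.dist p x ≤ G.dist p q := by
  classical
  have hsub : ((r₁.dropUntil p hp).append (r₂.takeUntil q hq)).IsSubwalk (r₁.append r₂) :=
    ⟨r₁.takeUntil p hp, r₂.dropUntil q hq, by
      conv_lhs => rw [← r₁.take_spec hp, ← r₂.take_spec hq]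
      simp only [Walk.append_assoc]⟩
  have hpq := length_eq_dist_of_subwalk hr hsub
  rw [Walk.length_append] at hpq
  calc G.dist p x ≤ (r₁.dropUntil p hp).length := dist_le _
    _ ≤ G.dist p q := by omega

end SimpleGraph

theorem cayleyGraph_eq_mulCayley {G : Type*} [Group G] (S : Set G) :
    cayleyGraph G S = SimpleGraph.mulCayley S := by
  ext u v
  rw [SimpleGraph.mulCayley_adj]
  rfl

namespace SimpleGraph

variable {G : Type*} [Group G] {S : Set G}

def mulCayleyMulLeft (S : Set G) (g : G) : mulCayley S ≃g mulCayley S where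
  toEquiv := Equiv.mulLeft g
  map_rel_iff' := mulCayley_adj_mul_iff_right

theorem mulCayley_dist_mul_left (g u v : G) :
    (mulCayley S).dist (g * u) (g * v) = (mulCayley S).dist u v :=
  (mulCayleyMulLeft S g).dist_eq u v

theorem mul_mem_segment_mulCayley (g : G) {u v x : G} (hx : x ∈ (mulCayley S).segment u v) :
    g * x ∈ (mulCayley S).segment (g * u) (g * v) :=
  (mulCayleyMulLeft S g).apply_mem_segment hx

theorem mulCayley_eq_or_adj_mul {s : G} (hs : s ∈ S) (g : G) :
    g = g * s ∨ (mulCayley S).Adj g (g * s) := by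
  rw [mulCayley_adj]
  by_cases h : g = g * s
  · exact Or.inl h
  · exact Or.inr ⟨h, Or.inl (by simpa using hs)⟩

theorem mulCayley_connected (hS : Subgroup.closure S = ⊤) : (mulCayley S).Connected := by
  have hreach : ∀ {s : G}, s ∈ S → ∀ g, (mulCayley S).Reachable g (g * s) := fun hs g =>
    (mulCayley_eq_or_adj_mul hs g).elim (fun h => h ▸ Reachable.refl g) Adj.reachable
  have hone : ∀ x, (mulCayley S).Reachable 1 x := fun x => by
    induction (hS ▸ Subgroup.mem_top x : x ∈ Subgroup.closure S)
      using Subgroup.closure_induction_right with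
    | one => rfl
    | mul_right x _ s hs ih => exact ih.trans (hreach hs x)
    | mul_inv_cancel x _ s hs ih => exact ih.trans (by simpa using (hreach hs (x * s⁻¹)).symm)
  exact (connected_iff _).mpr ⟨fun u v => (hone u).symm.trans (hone v), ⟨1⟩⟩

end SimpleGraph

namespace Subgroup

open SimpleGraph

variable {G : Type*} [Group G] {S : Set G} {A : Subgroup G} {C : ℕ}

def IsQuasiconvex (A : Subgroup G) (Γ : SimpleGraph G) (C : ℕ) : Prop :=
  ∀ a ∈ A, ∀ x ∈ Γ.segment 1 a, ∃ b ∈ A, Γ.dist x b ≤ C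

theorem isQuasiconvex_closure (hT : (mulCayley S).IsTree) {F : Set G}
    (hC : ∀ s ∈ F, (mulCayley S).dist 1 s ≤ C) :
    (closure F).IsQuasiconvex (mulCayley S) C := by
  intro a ha
  induction ha using closure_induction with
  | mem s hs =>
    intro x hx
    refine ⟨1, one_mem _, ?_⟩
    rw [SimpleGraph.dist_comm]
    exact ((hT.connected.preconnected 1 s).dist_le_of_mem_segment hx).trans (hC s hs)
  | one =>
    intro x hx
    rw [segment_self_subset hx]
    exact ⟨1, one_mem _, by simp⟩
  | mul a b ha hb iha ihb =>
    intro x hx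
    rcases hT.segment_subset_union 1 a (a * b) hx with hx | hx
    · exact iha x hx
    · obtain ⟨c, hc, hxc⟩ := ihb (a⁻¹ * x) (by simpa using mul_mem_segment_mulCayley a⁻¹ hx)
      refine ⟨a * c, mul_mem ha hc, ?_⟩
      rwa [← mulCayley_dist_mul_left a⁻¹, inv_mul_cancel_left]
  | inv a ha iha =>
    intro x hx
    obtain ⟨c, hc, hxc⟩ := iha (a * x) (by
      rw [segment_comm]
      simpa using mul_mem_segment_mulCayley a hx)
    refine ⟨a⁻¹ * c, mul_mem (inv_mem ha) hc, ?_⟩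
    rwa [← mulCayley_dist_mul_left a, mul_inv_cancel_left]

theorem IsQuasiconvex.dist_le_of_mem_segment (hT : (mulCayley S).Connected)
    (hA : A.IsQuasiconvex (mulCayley S) C) {h h' x : G} (hh : h⁻¹ * h' ∈ A)
    (hx : x ∈ (mulCayley S).segment h h') :
    (mulCayley (S ∪ A)).dist x h ≤ C + 1 := by
  have hle : mulCayley S ≤ mulCayley (S ∪ A) := mulCayley_mono Set.subset_union_left
  obtain ⟨b, hb, hxb⟩ := hA _ hh (h⁻¹ * x) (by simpa using mul_mem_segment_mulCayley h⁻¹ hx)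
  have hxb' : (mulCayley (S ∪ A)).dist x (h * b) ≤ C := by
    refine ((hT.preconnected x (h * b)).dist_anti hle).trans ?_
    rwa [← mulCayley_dist_mul_left h⁻¹, inv_mul_cancel_left]
  have hbh : (mulCayley (S ∪ A)).dist (h * b) h ≤ 1 := by
    rw [SimpleGraph.dist_comm]
    exact dist_le_one_of_eq_or_adj (mulCayley_eq_or_adj_mul (Set.mem_union_right S hb) h)
  exact ((hT.mono hle).dist_triangle (v := h * b)).trans (by omega)

theorem IsQuasiconvex.exists_mem_support_dist_le (hT : (mulCayley S).IsTree)
    (hA : A.IsQuasiconvex (mulCayley S) C) {u v : G} (W : (mulCayley (S ∪ A)).Walk u v) :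
    ∀ x ∈ (mulCayley S).segment u v, ∃ p ∈ W.support, (mulCayley (S ∪ A)).dist x p ≤ C + 1 := by
  induction W with
  | nil =>
    intro x hx
    rw [segment_self_subset hx]
    exact ⟨_, Walk.start_mem_support _, by simp⟩
  | @cons u u₁ v h W ih =>
    intro x hx
    rcases hT.segment_subset_union u u₁ v hx with hx | hx
    · rw [mulCayley_union, sup_adj] at h
      rcases h with hS | hA'
      · rcases hS.segment_subset hx with rfl | rfl
        · exact ⟨x, Walk.start_mem_support _, by simp⟩
        · exact ⟨x, by simp, by simp⟩
      · have hh : u⁻¹ * u₁ ∈ A := by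
          rcases ((mulCayley_adj _ _ _).mp hA').2 with h | h
          · exact h
          · simpa using inv_mem h
        exact ⟨u, Walk.start_mem_support _, hA.dist_le_of_mem_segment hT.connected hh hx⟩
    · obtain ⟨p, hp, hxp⟩ := ih x hx
      exact ⟨p, by simp [hp], hxp⟩

theorem IsQuasiconvex.exists_mem_segment_dist_le (hT : (mulCayley S).IsTree)
    (hA : A.IsQuasiconvex (mulCayley S) C) {u w x : G} (r : (mulCayley (S ∪ A)).Walk u w)
    (hr : r.length = (mulCayley (S ∪ A)).dist u w) (hx : x ∈ r.support) :
    ∃ z ∈ (mulCayley S).segment u w, (mulCayley (S ∪ A)).dist x z ≤ 3 * (C + 1) + 1 := by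
  classical
  obtain ⟨P, hP⟩ := hT.connected.exists_isPath u x
  have hPseg := hT.isAcyclic.support_subset_segment hP
  -- `y` lies on both segments `[u, x]` and `[x, w]`, hence near both halves of `r`.
  obtain ⟨z, hz, y, hyP, hy, hzy⟩ := P.exists_adj_of_support_subset_union start_mem_segment
    start_mem_segment fun y hy => by
      simpa only [segment_comm _ w x, Set.mem_union] using
        hT.segment_subset_union u w x (hPseg y hy)
  obtain ⟨p, hp, hyp⟩ := hA.exists_mem_support_dist_le hT (r.takeUntil x hx) y (hPseg y hyP)
  obtain ⟨q, hq, hyq⟩ := hA.exists_mem_support_dist_le hT (r.dropUntil x hx) y hy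
  have hpx := Walk.dist_le_of_mem_support_append _ _ (by rwa [r.take_spec hx]) hp hq
  set Γ := mulCayley (S ∪ (A : Set G))
  have hle : mulCayley S ≤ Γ := mulCayley_mono Set.subset_union_left
  have hΓ := hT.connected.mono hle
  have hpy : Γ.dist p y ≤ C + 1 := by rwa [SimpleGraph.dist_comm]
  have hxp : Γ.dist x p ≤ 2 * (C + 1) := by
    rw [SimpleGraph.dist_comm]
    calc Γ.dist p x ≤ Γ.dist p q := hpx
      _ ≤ Γ.dist p y + Γ.dist y q := hΓ.dist_triangle
      _ ≤ 2 * (C + 1) := by omega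
  have hyz : Γ.dist y z ≤ 1 := by
    rw [SimpleGraph.dist_comm]
    exact dist_le_one_of_eq_or_adj (hzy.imp_right (@hle _ _))
  refine ⟨z, hz, ?_⟩
  calc Γ.dist x z ≤ Γ.dist x p + (Γ.dist p y + Γ.dist y z) :=
        hΓ.dist_triangle.trans (Nat.add_le_add_left hΓ.dist_triangle _)
    _ ≤ 3 * (C + 1) + 1 := by omega

theorem IsQuasiconvex.isHyperbolic_mulCayley (hT : (mulCayley S).IsTree)
    (hA : A.IsQuasiconvex (mulCayley S) C) : (mulCayley (S ∪ A)).IsHyperbolic := by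
  refine ⟨4 * (C + 1) + 1, fun u v w p q r _ _ hr x hx => ?_⟩
  obtain ⟨z, hz, hxz⟩ := hA.exists_mem_segment_dist_le hT r hr hx
  obtain ⟨y, hy, hzy⟩ : ∃ y, (y ∈ p.support ∨ y ∈ q.support) ∧
      (mulCayley (S ∪ A)).dist z y ≤ C + 1 := by
    rcases hT.segment_subset_union u v w hz with hz | hz
    · obtain ⟨y, hy, hzy⟩ := hA.exists_mem_support_dist_le hT p z hz
      exact ⟨y, Or.inl hy, hzy⟩
    · obtain ⟨y, hy, hzy⟩ := hA.exists_mem_support_dist_le hT q z hz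
      exact ⟨y, Or.inr hy, hzy⟩
  have hΓ := hT.connected.mono (mulCayley_mono (Set.subset_union_left (t := (A : Set G))))
  exact ⟨y, hy, (hΓ.dist_triangle (v := z)).trans (by omega)⟩

end Subgroup

namespace FreeGroup

open SimpleGraph

variable {α : Type*}

theorem exists_eq_mul_mk_of_adj {u v : FreeGroup α} (h : (mulCayley (Set.range of)).Adj u v) :
    ∃ ℓ : α × Bool, v = u * mk [ℓ] := by
  rcases ((mulCayley_adj _ _ _).mp h).2 with ⟨a, ha⟩ | ⟨a, ha⟩
  · exact ⟨(a, true), by rw [show mk [(a, true)] = of a from rfl, ha, mul_inv_cancel_left]⟩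
  · refine ⟨(a, false), ?_⟩
    rw [show mk [(a, false)] = (of a)⁻¹ from (inv_mk (L := [(a, true)])).symm, ha, mul_inv_rev,
      inv_inv, mul_inv_cancel_left]

/-- `y` plays the vertex after `u * mk [ℓ]` on a walk from `u` spelling `ℓ :: L`: if the walk
does not step straight back to `u`, that word is reduced. -/
theorem isReduced_cons_of_ne {ℓ : α × Bool} {L : List (α × Bool)} {u y : FreeGroup α}
    (hL : IsReduced L) (hy : ∀ m ∈ L.head?, y = u * mk [ℓ] * mk [m]) (hne : y ≠ u) :
    IsReduced (ℓ :: L) := by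
  cases L with
  | nil => exact .singleton
  | cons m L =>
    refine isReduced_cons_cons.mpr ⟨fun h1 => ?_, hL⟩
    by_contra h2
    have hm : mk [m] = (mk [ℓ])⁻¹ := by
      rw [inv_mk]
      obtain ⟨a, b⟩ := ℓ
      obtain ⟨a', b'⟩ := m
      cases b <;> cases b' <;> simp_all [invRev]
    exact hne (by rw [hy m rfl, hm, mul_inv_cancel_right])

theorem exists_isReduced_of_isPath {u v : FreeGroup α}
    (W : (mulCayley (Set.range (of : α → FreeGroup α))).Walk u v) (hW : W.IsPath) :
    ∃ L : List (α × Bool), IsReduced L ∧ L.length = W.length ∧ v = u * mk L ∧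
      ∀ m ∈ L.head?, W.getVert 1 = u * mk [m] := by
  induction W with
  | nil => exact ⟨[], .nil, rfl, by simp [← one_eq_mk], by simp⟩
  | @cons u u₁ v h W ih =>
    rw [Walk.cons_isPath_iff] at hW
    obtain ⟨L, hL, hlen, hv, hhead⟩ := ih hW.1
    obtain ⟨ℓ, rfl⟩ := exists_eq_mul_mk_of_adj h
    have hne : W.getVert 1 ≠ u := fun h1 =>
      hW.2 (by simpa only [h1] using W.getVert_mem_support 1)
    refine ⟨ℓ :: L, isReduced_cons_of_ne hL hhead hne, by simp [hlen], ?_, by simp⟩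
    rw [hv, mul_assoc, mul_mk]
    rfl

theorem isAcyclic_mulCayley_range_of :
    (mulCayley (Set.range (of : α → FreeGroup α))).IsAcyclic := by
  classical
  intro v c hc
  cases c with
  | nil => exact hc.not_nil Walk.Nil.nil
  | @cons _ u₁ _ h W =>
    have hlen : 2 ≤ W.length := by simpa using hc.three_le_length
    rw [Walk.cons_isCycle_iff] at hc
    obtain ⟨L, hL, -, hv, hhead⟩ := exists_isReduced_of_isPath W hc.1
    obtain ⟨ℓ, rfl⟩ := exists_eq_mul_mk_of_adj h
    have hne : W.getVert 1 ≠ v := fun h1 =>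
      absurd ((hc.1.getVert_eq_end_iff (by omega)).mp h1) (by omega)
    have hred := isReduced_cons_of_ne hL hhead hne
    have hone : mk (ℓ :: L) = 1 := by
      rw [mul_assoc, left_eq_mul, mul_mk] at hv
      simpa using hv
    have hword := congrArg toWord hone
    rw [toWord_mk, hred.reduce_eq, toWord_one] at hword
    exact List.cons_ne_nil _ _ hword

theorem isTree_mulCayley_range_of : (mulCayley (Set.range (of : α → FreeGroup α))).IsTree :=
  ⟨mulCayley_connected (closure_range_of α), isAcyclic_mulCayley_range_of⟩

end FreeGroup

/-- **(Used in the proof of Osin, Corollary 1.4.)** A finitely generated free group is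
weakly hyperbolic relative to any finitely generated subgroup. -/
theorem freeGroup_weakly_relatively_hyperbolic {α : Type*} [Finite α]
    (A : Subgroup (FreeGroup α)) (hA : A.FG) :
    IsWeaklyRelativelyHyperbolic (FreeGroup α) (fun _ : Unit => A) := by
  obtain ⟨F, rfl⟩ := hA
  have hT := FreeGroup.isTree_mulCayley_range_of (α := α)
  have hqc := Subgroup.isQuasiconvex_closure hT fun s (hs : s ∈ F) =>
    F.le_sup (f := (SimpleGraph.mulCayley (Set.range FreeGroup.of)).dist 1) hs
  refine ⟨Set.range FreeGroup.of, Set.finite_range _, ?_, ?_⟩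
  · exact eq_top_mono (Subgroup.closure_mono Set.subset_union_left) (FreeGroup.closure_range_of α)
  · rw [relCayleyGraph, Set.iUnion_const, cayleyGraph_eq_mulCayley]
    exact hqc.isHyperbolic_mulCayley hT
end
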